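/- arXiv:2303.09958 — 9 statements merged into one kernel-verified Lean document; each statement's English description precedes it below -/
import Mathlib

section
/- If A is an F-syndetic subset of S and B is a G-syndetic subset of T, then A × B is an H-syndetic subset of S × T, where H is the filter on S × T generated by F × G. -/
/-- `A` is `F`-syndetic: for every `V ∈ F` there is a finite `G₀ ⊆ V`
with `G₀⁻¹A = ⋃_{t ∈ G₀} t⁻¹A ∈ F`. -/
def FSyndetic {S : Type*} [Semigroup S] (F : Filter S) (A : Set S) : Prop :=
  ∀ V ∈ F, ∃ G₀ : Finset S, ↑G₀ ⊆ V ∧ {y : S | ∃ t ∈ G₀, t * y ∈ A} ∈ F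

/-- the product of an `F`-syndetic set and a `G`-syndetic set is
syndetic with respect to the filter generated by `F × G` (namely `F ×ˢ G`). -/
theorem product_of_filter_syndetic
    {S T : Type*} [Semigroup S] [Semigroup T]
    (F : Filter S) (G : Filter T) (A : Set S) (B : Set T)
    (hA : FSyndetic F A) (hB : FSyndetic G B) :
    FSyndetic (F ×ˢ G) (A ×ˢ B) := by
  intro V hV
  rw [Filter.mem_prod_iff] at hV
  obtain ⟨U, hU, W, hW, hUW⟩ := hV
  obtain ⟨G₀, hG₀U, hG₀⟩ := hA U hU
  obtain ⟨H₀, hH₀W, hH₀⟩ := hB W hW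
  refine ⟨G₀ ×ˢ H₀, ?_, ?_⟩
  · intro p hp
    rw [Finset.coe_product] at hp
    exact hUW ⟨hG₀U hp.1, hH₀W hp.2⟩
  · apply Filter.mem_of_superset (Filter.prod_mem_prod hG₀ hH₀)
    rintro ⟨x, y⟩ ⟨⟨t₁, ht₁, hxt₁⟩, ⟨t₂, ht₂, hyt₂⟩⟩
    exact ⟨(t₁, t₂), Finset.mem_product.2 ⟨ht₁, ht₂⟩, hxt₁, hyt₂⟩
end

section
/- If A is a piecewise F-syndetic subset of S and B is a piecewise G-syndetic subset of T, then A × B is a piecewise H-syndetic subset of S × T, where H is the filter on S × T generated by F × G. -/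
/-- `A` is piecewise `F`-syndetic (finite-intersection-property form): for every
`V ∈ F` there are a finite `F_V ⊆ V` and `W_V ∈ F` such that the family
`{(x⁻¹F_V⁻¹A) ∩ V : V ∈ F, x ∈ W_V}` has the finite intersection property.
Here `x⁻¹F_V⁻¹A ∩ V = {y | ∃ t ∈ F_V, t * (x * y) ∈ A} ∩ V`. -/
def PiecewiseFSyndetic {S : Type*} [Semigroup S] (F : Filter S) (A : Set S) : Prop :=
  ∃ (FV : Set S → Finset S) (WV : Set S → Set S),
    (∀ V ∈ F, ↑(FV V) ⊆ V ∧ WV V ∈ F) ∧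
    ∀ L : Finset (Set S × S), L.Nonempty →
      (∀ p ∈ L, p.1 ∈ F ∧ p.2 ∈ WV p.1) →
      (⋂ p ∈ L, ({y : S | ∃ t ∈ FV p.1, t * (p.2 * y) ∈ A} ∩ p.1)).Nonempty

/-- the product of a piecewise `F`-syndetic set and a piecewise
`G`-syndetic set is piecewise syndetic for the filter generated by `F × G`. -/
theorem product_of_piecewise_filter_syndetic
    {S T : Type*} [Semigroup S] [Semigroup T]
    (F : Filter S) (G : Filter T) (A : Set S) (B : Set T)
    (hA : PiecewiseFSyndetic F A) (hB : PiecewiseFSyndetic G B) :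
    PiecewiseFSyndetic (F ×ˢ G) (A ×ˢ B) := by
  classical
  obtain ⟨FS, WS, hS, hSfip⟩ := hA
  obtain ⟨FT, WT, hT, hTfip⟩ := hB
  have key : ∀ V ∈ F ×ˢ G, ∃ C, C ∈ F ∧ ∃ D, D ∈ G ∧ C ×ˢ D ⊆ V := by
    intro V hV
    rw [Filter.mem_prod_iff] at hV
    exact hV
  set CF : Set (S × T) → Set S := fun V =>
    if h : V ∈ F ×ˢ G then (key V h).choose else Set.univ with hCF
  set DF : Set (S × T) → Set T := fun V =>
    if h : V ∈ F ×ˢ G then ((key V h).choose_spec.2).choose else Set.univ with hDF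
  have spec : ∀ V, ∀ h : V ∈ F ×ˢ G,
      CF V ∈ F ∧ DF V ∈ G ∧ CF V ×ˢ DF V ⊆ V := by
    intro V h
    simp only [hCF, hDF, dif_pos h]
    exact ⟨(key V h).choose_spec.1, ((key V h).choose_spec.2).choose_spec.1,
      ((key V h).choose_spec.2).choose_spec.2⟩
  refine ⟨fun V => (FS (CF V)) ×ˢ (FT (DF V)),
          fun V => (WS (CF V)) ×ˢ (WT (DF V)), ?_, ?_⟩
  · intro V hV
    obtain ⟨hC, hD, hsub⟩ := spec V hV
    constructor
    · rw [Finset.coe_product]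
      exact subset_trans (Set.prod_mono (hS _ hC).1 (hT _ hD).1) hsub
    · exact Filter.prod_mem_prod (hS _ hC).2 (hT _ hD).2
  · intro L hL hLmem
    set LS : Finset (Set S × S) := L.image (fun p => (CF p.1, p.2.1)) with hLS
    set LT : Finset (Set T × T) := L.image (fun p => (DF p.1, p.2.2)) with hLT
    obtain ⟨a, ha⟩ := hSfip LS (hL.image _) (by
      intro q hq
      simp only [hLS, Finset.mem_image] at hq
      obtain ⟨p, hp, rfl⟩ := hq
      obtain ⟨hp1, hp2⟩ := hLmem p hp
      exact ⟨(spec p.1 hp1).1, hp2.1⟩)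
    obtain ⟨b, hb⟩ := hTfip LT (hL.image _) (by
      intro q hq
      simp only [hLT, Finset.mem_image] at hq
      obtain ⟨p, hp, rfl⟩ := hq
      obtain ⟨hp1, hp2⟩ := hLmem p hp
      exact ⟨((spec p.1 hp1).2).1, hp2.2⟩)
    refine ⟨(a, b), ?_⟩
    simp only [Set.mem_iInter]
    intro p hp
    have haS : a ∈ ({y : S | ∃ t ∈ FS (CF p.1), t * (p.2.1 * y) ∈ A} ∩ CF p.1) := by
      have : (CF p.1, p.2.1) ∈ LS := Finset.mem_image_of_mem _ hp
      simpa using (Set.mem_iInter.mp (Set.mem_iInter.mp ha (CF p.1, p.2.1))) this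
    have hbT : b ∈ ({y : T | ∃ t ∈ FT (DF p.1), t * (p.2.2 * y) ∈ B} ∩ DF p.1) := by
      have : (DF p.1, p.2.2) ∈ LT := Finset.mem_image_of_mem _ hp
      simpa using (Set.mem_iInter.mp (Set.mem_iInter.mp hb (DF p.1, p.2.2))) this
    obtain ⟨⟨t1, ht1, ht1A⟩, haC⟩ := haS
    obtain ⟨⟨t2, ht2, ht2B⟩, hbD⟩ := hbT
    constructor
    · refine ⟨(t1, t2), Finset.mem_product.mpr ⟨ht1, ht2⟩, ?_⟩
      exact Set.mk_mem_prod ht1A ht2B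
    · exact ((spec p.1 (hLmem p hp).1).2).2 (Set.mk_mem_prod haC hbD)
end

section
/- Let S and T be countable semigroups with idempotent filters F and G respectively such that F̄ and Ḡ are closed subsemigroups of βS and βT, and let H be the filter on S × T generated by F × G with H̄ a closed subsemigroup of β(S × T). If A is F-quasi-central in S and B is G-quasi-central in T, then A × B is H-quasi-central in S × T. -/
/-- `A` is `F`-quasi-central (combinatorial characterization, valid for
countable `S`): there is a decreasing sequence `(Cₙ)` of subsets of `A` such
that (i) for all `n` and `x ∈ Cₙ` there is `m` with `C_m ⊆ x⁻¹Cₙ`, and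
(ii) each `Cₙ` is piecewise `F`-syndetic. -/
def FQuasiCentral {S : Type*} [Semigroup S] (F : Filter S) (A : Set S) : Prop :=
  ∃ C : ℕ → Set S, (∀ n, C n ⊆ A) ∧ (∀ n, C (n + 1) ⊆ C n) ∧
    (∀ n, ∀ x ∈ C n, ∃ m, C m ⊆ {y : S | x * y ∈ C n}) ∧
    ∀ n, PiecewiseFSyndetic F (C n)

open Classical in
lemma piecewiseFSyndetic_prod {S T : Type*} [Semigroup S] [Semigroup T]
    (F : Filter S) (G : Filter T) {A : Set S} {B : Set T}
    (hA : PiecewiseFSyndetic F A) (hB : PiecewiseFSyndetic G B) :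
    PiecewiseFSyndetic (F ×ˢ G) (A ×ˢ B) := by
  obtain ⟨FA, WA, hA1, hA2⟩ := hA
  obtain ⟨FB, WB, hB1, hB2⟩ := hB
  choose V1 hV1 V2 hV2 hsub using
    fun (V : Set (S × T)) (h : V ∈ F ×ˢ G) => Filter.mem_prod_iff.mp h
  refine ⟨fun V => if h : V ∈ F ×ˢ G then (FA (V1 V h)) ×ˢ (FB (V2 V h)) else ∅,
    fun V => if h : V ∈ F ×ˢ G then (WA (V1 V h)) ×ˢ (WB (V2 V h)) else Set.univ,
    ?_, ?_⟩
  · intro V hV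
    simp only [dif_pos hV]
    constructor
    · refine subset_trans ?_ (hsub V hV)
      rw [Finset.coe_product]
      exact Set.prod_mono (hA1 _ (hV1 V hV)).1 (hB1 _ (hV2 V hV)).1
    · exact Filter.prod_mem_prod (hA1 _ (hV1 V hV)).2 (hB1 _ (hV2 V hV)).2
  · intro L hLne hL
    set L1 : Finset (Set S × S) :=
      L.attach.image (fun p => (V1 p.1.1 (hL p.1 p.2).1, p.1.2.1)) with hL1def
    set L2 : Finset (Set T × T) :=
      L.attach.image (fun p => (V2 p.1.1 (hL p.1 p.2).1, p.1.2.2)) with hL2def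
    have hL1ne : L1.Nonempty := (Finset.attach_nonempty_iff.mpr hLne).image _
    have hL2ne : L2.Nonempty := (Finset.attach_nonempty_iff.mpr hLne).image _
    have key : ∀ p (hp : p ∈ L),
        p.2.1 ∈ WA (V1 p.1 (hL p hp).1) ∧ p.2.2 ∈ WB (V2 p.1 (hL p hp).1) := by
      intro p hp
      have := (hL p hp).2
      simp only [dif_pos (hL p hp).1] at this
      exact this
    obtain ⟨y1, hy1⟩ := hA2 L1 hL1ne (by
      intro q hq
      rw [hL1def, Finset.mem_image] at hq
      obtain ⟨p, hp, rfl⟩ := hq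
      exact ⟨hV1 _ _, (key p.1 p.2).1⟩)
    obtain ⟨y2, hy2⟩ := hB2 L2 hL2ne (by
      intro q hq
      rw [hL2def, Finset.mem_image] at hq
      obtain ⟨p, hp, rfl⟩ := hq
      exact ⟨hV2 _ _, (key p.1 p.2).2⟩)
    refine ⟨(y1, y2), ?_⟩
    simp only [Set.mem_iInter] at hy1 hy2 ⊢
    intro p hp
    have h1 := hy1 (V1 p.1 (hL p hp).1, p.2.1)
      (by rw [hL1def, Finset.mem_image]; exact ⟨⟨p, hp⟩, L.mem_attach _, rfl⟩)
    have h2 := hy2 (V2 p.1 (hL p hp).1, p.2.2)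
      (by rw [hL2def, Finset.mem_image]; exact ⟨⟨p, hp⟩, L.mem_attach _, rfl⟩)
    obtain ⟨⟨t1, ht1, ht1A⟩, hy1V⟩ := h1
    obtain ⟨⟨t2, ht2, ht2B⟩, hy2V⟩ := h2
    refine ⟨⟨(t1, t2), ?_, ⟨ht1A, ht2B⟩⟩, hsub p.1 (hL p hp).1 ⟨hy1V, hy2V⟩⟩
    rw [dif_pos (hL p hp).1, Finset.mem_product]
    exact ⟨ht1, ht2⟩

/-- for countable semigroups `S`, `T` with idempotent filters
`F`, `G`, the product of an `F`-quasi-central set and a `G`-quasi-central set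
is quasi-central for the filter on `S × T` generated by `F × G`. -/
theorem product_of_F_quasi_central
    {S T : Type*} [Semigroup S] [Semigroup T] [Countable S] [Countable T]
    (F : Filter S) (G : Filter T)
    (hF : ∀ A ∈ F, {x : S | {y : S | x * y ∈ A} ∈ F} ∈ F)
    (hG : ∀ B ∈ G, {x : T | {y : T | x * y ∈ B} ∈ G} ∈ G)
    (A : Set S) (B : Set T)
    (hA : FQuasiCentral F A) (hB : FQuasiCentral G B) :
    FQuasiCentral (F ×ˢ G) (A ×ˢ B) := by
  obtain ⟨C, hCA, hCdec, hCshift, hCpws⟩ := hA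
  obtain ⟨D, hDB, hDdec, hDshift, hDpws⟩ := hB
  have hCmono : ∀ m n, m ≤ n → C n ⊆ C m := by
    intro m n h
    induction h with
    | refl => exact subset_rfl
    | step h ih => exact (hCdec _).trans ih
  have hDmono : ∀ m n, m ≤ n → D n ⊆ D m := by
    intro m n h
    induction h with
    | refl => exact subset_rfl
    | step h ih => exact (hDdec _).trans ih
  refine ⟨fun n => C n ×ˢ D n, fun n => Set.prod_mono (hCA n) (hDB n),
    fun n => Set.prod_mono (hCdec n) (hDdec n), ?_, fun n => piecewiseFSyndetic_prod F G (hCpws n) (hDpws n)⟩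
  intro n x hx
  obtain ⟨m1, hm1⟩ := hCshift n x.1 hx.1
  obtain ⟨m2, hm2⟩ := hDshift n x.2 hx.2
  refine ⟨max m1 m2, fun y hy => ?_⟩
  exact ⟨hm1 (hCmono m1 _ (le_max_left _ _) hy.1), hm2 (hDmono m2 _ (le_max_right _ _) hy.2)⟩
end

section
/- Let S and T be countable semigroups with idempotent filters F and G such that F̄ and Ḡ are closed subsemigroups of βS and βT, and let H be the filter on S × T generated by F × G with H̄ a closed subsemigroup of β(S × T). If A is an F-central set in S and B is a G-central set in T, then A × B is an H-central set in S × T. -/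
/-- A family `𝒜` of subsets of `S` is collectionwise piecewise `F`-syndetic:
for every `V ∈ F` there are functions `G_V : P_f(𝒜) → P_f(V)` and
`δ_V : P_f(𝒜) → F` such that the family
`{y⁻¹(G_V ℱ)⁻¹(⋂ℱ) ∩ V : y ∈ δ_V ℱ, ℱ ∈ P_f(𝒜)}` has the finite
intersection property, where
`y⁻¹(G_V ℱ)⁻¹(⋂ℱ) = ⋃_{t ∈ G_V ℱ} {z | t * (y * z) ∈ ⋂ℱ}`. -/
def CollectionwisePWFSyndetic {S : Type*} [Semigroup S]
    (F : Filter S) (𝒜 : Set (Set S)) : Prop :=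
  ∀ V ∈ F, ∃ (G : Finset (Set S) → Finset S) (δ : Finset (Set S) → Set S),
    (∀ ℱ : Finset (Set S), ℱ.Nonempty → ↑ℱ ⊆ 𝒜 →
      (G ℱ).Nonempty ∧ ↑(G ℱ) ⊆ V ∧ δ ℱ ∈ F) ∧
    ∀ L : Finset (Finset (Set S) × S), L.Nonempty →
      (∀ p ∈ L, p.1.Nonempty ∧ ↑p.1 ⊆ 𝒜 ∧ p.2 ∈ δ p.1) →
      (⋂ p ∈ L,
        ({z : S | ∃ t ∈ G p.1, t * (p.2 * z) ∈ ⋂₀ (↑p.1 : Set (Set S))} ∩ V)).Nonempty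

/-- `A` is `F`-central (combinatorial characterization, valid for countable
`S`): there is a decreasing sequence `(Cₙ)` of subsets of `A` such that
(i) for all `n` and `x ∈ Cₙ` there is `m` with `C_m ⊆ x⁻¹Cₙ`, and (ii) the
family `{Cₙ : n ∈ ℕ}` is collectionwise piecewise `F`-syndetic. -/
def FCentral {S : Type*} [Semigroup S] (F : Filter S) (A : Set S) : Prop :=
  ∃ C : ℕ → Set S, (∀ n, C n ⊆ A) ∧ (∀ n, C (n + 1) ⊆ C n) ∧
    (∀ n, ∀ x ∈ C n, ∃ m, C m ⊆ {y : S | x * y ∈ C n}) ∧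
    CollectionwisePWFSyndetic F {B | ∃ n, B = C n}

/-- for countable semigroups with idempotent filters `F`, `G`,
the product of an `F`-central set and a `G`-central set is central for the
filter on `S × T` generated by `F × G` (namely `F ×ˢ G`). -/
theorem product_of_F_central
    {S T : Type*} [Semigroup S] [Semigroup T] [Countable S] [Countable T]
    (F : Filter S) (G : Filter T)
    (hF : ∀ A ∈ F, {x : S | {y : S | x * y ∈ A} ∈ F} ∈ F)
    (hG : ∀ B ∈ G, {x : T | {y : T | x * y ∈ B} ∈ G} ∈ G)
    (A : Set S) (B : Set T)
    (hA : FCentral F A) (hB : FCentral G B) :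
    FCentral (F ×ˢ G) (A ×ˢ B) := by
  classical
  obtain ⟨C, hCA, hCdec, hCshift, hCsyn⟩ := hA
  obtain ⟨D, hDB, hDdec, hDshift, hDsyn⟩ := hB
  have hCanti : Antitone C := antitone_nat_of_succ_le hCdec
  have hDanti : Antitone D := antitone_nat_of_succ_le hDdec
  refine ⟨fun n => C n ×ˢ D n, fun n => Set.prod_mono (hCA n) (hDB n),
    fun n => Set.prod_mono (hCdec n) (hDdec n), ?_, ?_⟩
  · rintro n ⟨x, y⟩ ⟨hx, hy⟩
    obtain ⟨m₁, hm₁⟩ := hCshift n x hx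
    obtain ⟨m₂, hm₂⟩ := hDshift n y hy
    refine ⟨max m₁ m₂, ?_⟩
    rintro ⟨u, v⟩ ⟨hu, hv⟩
    exact ⟨hm₁ (hCanti (le_max_left _ _) hu), hm₂ (hDanti (le_max_right _ _) hv)⟩
  · intro V hV
    obtain ⟨V₁, hV₁, V₂, hV₂, hVsub⟩ := Filter.mem_prod_iff.mp hV
    obtain ⟨G₁, δ₁, hG₁, hFIP₁⟩ := hCsyn V₁ hV₁
    obtain ⟨G₂, δ₂, hG₂, hFIP₂⟩ := hDsyn V₂ hV₂
    set idx : Set (S × T) → ℕ := fun E =>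
      if h : ∃ n, E = C n ×ˢ D n then h.choose else 0 with hidx
    have hidxeq : ∀ E : Set (S × T), (∃ n, E = C n ×ˢ D n) →
        E = C (idx E) ×ˢ D (idx E) := by
      intro E h
      simp only [hidx, dif_pos h]
      exact h.choose_spec
    set g₁ : Set (S × T) → Set S := fun E => C (idx E) with hg₁
    set g₂ : Set (S × T) → Set T := fun E => D (idx E) with hg₂
    have himg₁ : ∀ ℱ : Finset (Set (S × T)), ℱ.Nonempty →
        ↑ℱ ⊆ {B | ∃ n, B = C n ×ˢ D n} →
        (ℱ.image g₁).Nonempty ∧ ↑(ℱ.image g₁) ⊆ {B | ∃ n, B = C n} := by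
      intro ℱ hne hsub
      refine ⟨hne.image g₁, ?_⟩
      intro B' hB'
      obtain ⟨E, _, rfl⟩ := Finset.mem_coe.mp hB' |> Finset.mem_image.mp
      exact ⟨idx E, rfl⟩
    have himg₂ : ∀ ℱ : Finset (Set (S × T)), ℱ.Nonempty →
        ↑ℱ ⊆ {B | ∃ n, B = C n ×ˢ D n} →
        (ℱ.image g₂).Nonempty ∧ ↑(ℱ.image g₂) ⊆ {B | ∃ n, B = D n} := by
      intro ℱ hne hsub
      refine ⟨hne.image g₂, ?_⟩
      intro B' hB'
      obtain ⟨E, _, rfl⟩ := Finset.mem_coe.mp hB' |> Finset.mem_image.mp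
      exact ⟨idx E, rfl⟩
    refine ⟨fun ℱ => (G₁ (ℱ.image g₁)) ×ˢ (G₂ (ℱ.image g₂)),
            fun ℱ => (δ₁ (ℱ.image g₁)) ×ˢ (δ₂ (ℱ.image g₂)), ?_, ?_⟩
    · intro ℱ hne hsub
      obtain ⟨hne₁, hsub₁⟩ := himg₁ ℱ hne hsub
      obtain ⟨hne₂, hsub₂⟩ := himg₂ ℱ hne hsub
      obtain ⟨hGne₁, hGsub₁, hδ₁⟩ := hG₁ _ hne₁ hsub₁
      obtain ⟨hGne₂, hGsub₂, hδ₂⟩ := hG₂ _ hne₂ hsub₂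
      refine ⟨hGne₁.product hGne₂, ?_, Filter.prod_mem_prod hδ₁ hδ₂⟩
      rw [Finset.coe_product]
      exact (Set.prod_mono hGsub₁ hGsub₂).trans hVsub
    · intro L hLne hL
      set L₁ : Finset (Finset (Set S) × S) :=
        L.image (fun p => (p.1.image g₁, p.2.1)) with hL₁def
      set L₂ : Finset (Finset (Set T) × T) :=
        L.image (fun p => (p.1.image g₂, p.2.2)) with hL₂def
      obtain ⟨z₁, hz₁⟩ := hFIP₁ L₁ (hLne.image _) (by
        intro q hq
        obtain ⟨p, hp, rfl⟩ := Finset.mem_image.mp hq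
        obtain ⟨hpne, hpsub, hpδ⟩ := hL p hp
        exact ⟨(himg₁ p.1 hpne hpsub).1, (himg₁ p.1 hpne hpsub).2, hpδ.1⟩)
      obtain ⟨z₂, hz₂⟩ := hFIP₂ L₂ (hLne.image _) (by
        intro q hq
        obtain ⟨p, hp, rfl⟩ := Finset.mem_image.mp hq
        obtain ⟨hpne, hpsub, hpδ⟩ := hL p hp
        exact ⟨(himg₂ p.1 hpne hpsub).1, (himg₂ p.1 hpne hpsub).2, hpδ.2⟩)
      refine ⟨(z₁, z₂), ?_⟩
      rw [Set.mem_iInter₂]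
      intro p hp
      have hq₁ : (p.1.image g₁, p.2.1) ∈ L₁ :=
        Finset.mem_image.mpr ⟨p, hp, rfl⟩
      have hq₂ : (p.1.image g₂, p.2.2) ∈ L₂ :=
        Finset.mem_image.mpr ⟨p, hp, rfl⟩
      have h₁ := Set.mem_iInter₂.mp hz₁ _ hq₁
      have h₂ := Set.mem_iInter₂.mp hz₂ _ hq₂
      obtain ⟨⟨t₁, ht₁G, ht₁⟩, hzV₁⟩ := h₁
      obtain ⟨⟨t₂, ht₂G, ht₂⟩, hzV₂⟩ := h₂
      obtain ⟨hpne, hpsub, hpδ⟩ := hL p hp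
      constructor
      · refine ⟨(t₁, t₂), Finset.mk_mem_product ht₁G ht₂G, ?_⟩
        intro E hE
        have hEeq := hidxeq E (hpsub hE)
        rw [hEeq]
        constructor
        · exact ht₁ (g₁ E) (Finset.mem_coe.mpr (Finset.mem_image_of_mem g₁ hE))
        · exact ht₂ (g₂ E) (Finset.mem_coe.mpr (Finset.mem_image_of_mem g₂ hE))
      · exact hVsub ⟨hzV₁, hzV₂⟩
end

section
/- If 𝒜 is a collectionwise piecewise F-syndetic family of subsets of S and ℬ is a collectionwise piecewise G-syndetic family of subsets of T, then the family {C × D : C ∈ 𝒜, D ∈ ℬ} is collectionwise piecewise H-syndetic in S × T, where H is the filter generated by F × G. -/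
/-- if `𝒜` is collectionwise piecewise `F`-syndetic in `S` and
`ℬ` is collectionwise piecewise `G`-syndetic in `T`, then
`{C × D : C ∈ 𝒜, D ∈ ℬ}` is collectionwise piecewise syndetic for the filter
on `S × T` generated by `F × G` (namely `F ×ˢ G`). -/
theorem product_of_collectionwise_pw_syndetic
    {S T : Type*} [Semigroup S] [Semigroup T]
    (F : Filter S) (G : Filter T)
    (𝒜 : Set (Set S)) (ℬ : Set (Set T))
    (hA : CollectionwisePWFSyndetic F 𝒜) (hB : CollectionwisePWFSyndetic G ℬ) :
    CollectionwisePWFSyndetic (F ×ˢ G)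
      {E : Set (S × T) | ∃ C ∈ 𝒜, ∃ D ∈ ℬ, E = C ×ˢ D} := by
  classical
  intro V hV
  rw [Filter.mem_prod_iff] at hV
  obtain ⟨V₁, hV₁, V₂, hV₂, hVsub⟩ := hV
  obtain ⟨G₁, δ₁, h₁, h₁fip⟩ := hA V₁ hV₁
  obtain ⟨G₂, δ₂, h₂, h₂fip⟩ := hB V₂ hV₂
  set P : Set (Set (S × T)) := {E : Set (S × T) | ∃ C ∈ 𝒜, ∃ D ∈ ℬ, E = C ×ˢ D} with hP
  have hch : ∀ E : Set (S × T), ∃ (C : Set S) (D : Set T),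
      E ∈ P → C ∈ 𝒜 ∧ D ∈ ℬ ∧ E = C ×ˢ D := by
    intro E
    by_cases h : E ∈ P
    · obtain ⟨C, hC, D, hD, hE⟩ := h
      exact ⟨C, D, fun _ => ⟨hC, hD, hE⟩⟩
    · exact ⟨∅, ∅, fun h' => absurd h' h⟩
  choose c d hcd using hch
  have hsub1 : ∀ (ℱ : Finset (Set (S × T))), (↑ℱ : Set (Set (S × T))) ⊆ P →
      (↑(ℱ.image c) : Set (Set S)) ⊆ 𝒜 := by
    intro ℱ hsub C hC
    rw [Finset.mem_coe, Finset.mem_image] at hC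
    obtain ⟨E, hE, rfl⟩ := hC
    exact (hcd E (hsub (Finset.mem_coe.mpr hE))).1
  have hsub2 : ∀ (ℱ : Finset (Set (S × T))), (↑ℱ : Set (Set (S × T))) ⊆ P →
      (↑(ℱ.image d) : Set (Set T)) ⊆ ℬ := by
    intro ℱ hsub D hD
    rw [Finset.mem_coe, Finset.mem_image] at hD
    obtain ⟨E, hE, rfl⟩ := hD
    exact (hcd E (hsub (Finset.mem_coe.mpr hE))).2.1
  have hInter : ∀ (ℱ : Finset (Set (S × T))), (↑ℱ : Set (Set (S × T))) ⊆ P →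
      ∀ x : S × T,
        x.1 ∈ ⋂₀ (↑(ℱ.image c) : Set (Set S)) →
        x.2 ∈ ⋂₀ (↑(ℱ.image d) : Set (Set T)) →
        x ∈ ⋂₀ (↑ℱ : Set (Set (S × T))) := by
    intro ℱ hsub x hx1 hx2 E hE
    obtain ⟨hC, hD, hEq⟩ := hcd E (hsub hE)
    rw [hEq]
    refine ⟨hx1 _ ?_, hx2 _ ?_⟩
    · exact Finset.mem_coe.mpr (Finset.mem_image_of_mem c (Finset.mem_coe.mp hE))
    · exact Finset.mem_coe.mpr (Finset.mem_image_of_mem d (Finset.mem_coe.mp hE))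
  refine ⟨fun ℱ => (G₁ (ℱ.image c)) ×ˢ (G₂ (ℱ.image d)),
          fun ℱ => (δ₁ (ℱ.image c)) ×ˢ (δ₂ (ℱ.image d)), ?_, ?_⟩
  · intro ℱ hne hsub
    obtain ⟨hG1ne, hG1sub, hδ1⟩ := h₁ _ (hne.image c) (hsub1 ℱ hsub)
    obtain ⟨hG2ne, hG2sub, hδ2⟩ := h₂ _ (hne.image d) (hsub2 ℱ hsub)
    refine ⟨hG1ne.product hG2ne, ?_, Filter.prod_mem_prod hδ1 hδ2⟩
    intro t ht
    rw [Finset.mem_coe, Finset.mem_product] at ht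
    exact hVsub (Set.mem_prod.mpr ⟨hG1sub (Finset.mem_coe.mpr ht.1),
      hG2sub (Finset.mem_coe.mpr ht.2)⟩)
  · intro L hLne hL
    have hz₁ := h₁fip (L.image (fun p => (p.1.image c, p.2.1))) (hLne.image _) ?_
    · have hz₂ := h₂fip (L.image (fun p => (p.1.image d, p.2.2))) (hLne.image _) ?_
      · obtain ⟨z₁, hz₁⟩ := hz₁
        obtain ⟨z₂, hz₂⟩ := hz₂
        refine ⟨(z₁, z₂), Set.mem_iInter₂.mpr ?_⟩
        intro p hp
        have hq1 := Set.mem_iInter₂.mp hz₁ _ (Finset.mem_image_of_mem _ hp)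
        have hq2 := Set.mem_iInter₂.mp hz₂ _ (Finset.mem_image_of_mem _ hp)
        obtain ⟨⟨t₁, ht₁, ht₁m⟩, hz₁V⟩ := hq1
        obtain ⟨⟨t₂, ht₂, ht₂m⟩, hz₂V⟩ := hq2
        refine ⟨⟨(t₁, t₂), Finset.mem_product.mpr ⟨ht₁, ht₂⟩,
          hInter p.1 (hL p hp).2.1 _ ht₁m ht₂m⟩,
          hVsub (Set.mem_prod.mpr ⟨hz₁V, hz₂V⟩)⟩
      · intro q hq
        rw [Finset.mem_image] at hq
        obtain ⟨p, hp, rfl⟩ := hq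
        obtain ⟨hpne, hpsub, hpδ⟩ := hL p hp
        exact ⟨hpne.image d, hsub2 p.1 hpsub, hpδ.2⟩
    · intro q hq
      rw [Finset.mem_image] at hq
      obtain ⟨p, hp, rfl⟩ := hq
      obtain ⟨hpne, hpsub, hpδ⟩ := hL p hp
      exact ⟨hpne.image c, hsub1 p.1 hpsub, hpδ.1⟩
end

section
/- For a semigroup S with identity e, a family 𝒜 ⊆ P(S) satisfies: there exist functions G : P_f(𝒜) → P_f(S) and x : P_f(𝒜) × P_f(S) → S such that for all F ∈ P_f(S) and all ℱ, ℋ ∈ P_f(𝒜) with ℱ ⊆ ℋ, F·x(ℋ,F) ⊆ ⋃_{t∈G(ℱ)} t⁻¹(⋂ℱ), if and only if there exists a function G : P_f(𝒜) → P_f(S) such that the family {y⁻¹(G(ℱ))⁻¹(⋂ℱ) : y ∈ S, ℱ ∈ P_f(𝒜)} has the finite intersection property. -/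
/-- for a monoid `S` (a semigroup with identity), a family `𝒜`
of subsets of `S` admits functions `G : P_f(𝒜) → P_f(S)` and
`x : P_f(𝒜) × P_f(S) → S` with
`F · x(ℋ, F) ⊆ ⋃_{t ∈ G ℱ} t⁻¹(⋂ℱ)` for all finite `F ⊆ S` and
`ℱ ⊆ ℋ` in `P_f(𝒜)`, if and only if it admits a function
`G : P_f(𝒜) → P_f(S)` such that
`{y⁻¹(G ℱ)⁻¹(⋂ℱ) : y ∈ S, ℱ ∈ P_f(𝒜)}` has the finite intersection
property. -/
theorem collectionwise_pw_syndetic_defs_equivalent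
    {S : Type*} [Monoid S] (𝒜 : Set (Set S)) :
    (∃ (G : Finset (Set S) → Finset S) (x : Finset (Set S) × Finset S → S),
      (∀ ℱ : Finset (Set S), ℱ.Nonempty → ↑ℱ ⊆ 𝒜 → (G ℱ).Nonempty) ∧
      ∀ Fs : Finset S, Fs.Nonempty →
        ∀ ℱ ℋ : Finset (Set S), ℱ.Nonempty → ↑ℱ ⊆ 𝒜 →
          ℋ.Nonempty → ↑ℋ ⊆ 𝒜 → ℱ ⊆ ℋ →
          ∀ f ∈ Fs, ∃ t ∈ G ℱ,
            t * (f * x (ℋ, Fs)) ∈ ⋂₀ (↑ℱ : Set (Set S))) ↔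
    (∃ G : Finset (Set S) → Finset S,
      (∀ ℱ : Finset (Set S), ℱ.Nonempty → ↑ℱ ⊆ 𝒜 → (G ℱ).Nonempty) ∧
      ∀ L : Finset (S × Finset (Set S)), L.Nonempty →
        (∀ p ∈ L, p.2.Nonempty ∧ ↑p.2 ⊆ 𝒜) →
        (⋂ p ∈ L,
          {z : S | ∃ t ∈ G p.2, t * (p.1 * z) ∈ ⋂₀ (↑p.2 : Set (Set S))}).Nonempty) := by
  classical
  constructor
  · rintro ⟨G, x, hGne, hx⟩
    refine ⟨G, hGne, ?_⟩
    intro L hL hprop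
    set ℋ : Finset (Set S) := L.biUnion Prod.snd with hℋ
    set Fs : Finset S := L.image Prod.fst with hFs
    have hℋne : ℋ.Nonempty := by
      obtain ⟨p, hp⟩ := hL
      obtain ⟨A, hA⟩ := (hprop p hp).1
      exact ⟨A, Finset.mem_biUnion.2 ⟨p, hp, hA⟩⟩
    have hℋ𝒜 : (↑ℋ : Set (Set S)) ⊆ 𝒜 := by
      intro A hA
      rw [Finset.coe_biUnion] at hA
      simp only [Set.mem_iUnion] at hA
      obtain ⟨p, hp, hA⟩ := hA
      exact (hprop p hp).2 hA
    have hFsne : Fs.Nonempty := hL.image _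
    refine ⟨x (ℋ, Fs), ?_⟩
    simp only [Set.mem_iInter]
    intro p hp
    have hℱne := (hprop p hp).1
    have hℱ𝒜 := (hprop p hp).2
    have hsub : p.2 ⊆ ℋ := fun A hA => Finset.mem_biUnion.2 ⟨p, hp, hA⟩
    exact hx Fs hFsne p.2 ℋ hℱne hℱ𝒜 hℋne hℋ𝒜 hsub p.1
      (Finset.mem_image.2 ⟨p, hp, rfl⟩)
  · rintro ⟨G, hGne, hFIP⟩
    set L : Finset (Set S) × Finset S → Finset (S × Finset (Set S)) :=
      fun q => q.2 ×ˢ (q.1.powerset.filter (fun t => t.Nonempty ∧ ↑t ⊆ 𝒜)) with hLdef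
    set x : Finset (Set S) × Finset S → S := fun q =>
      if h : (⋂ p ∈ L q,
          {z : S | ∃ t ∈ G p.2, t * (p.1 * z) ∈ ⋂₀ (↑p.2 : Set (Set S))}).Nonempty
      then h.some else 1 with hxdef
    refine ⟨G, x, hGne, ?_⟩
    intro Fs hFsne ℱ ℋ hℱne hℱ𝒜 hℋne hℋ𝒜 hsub f hf
    have hmemℱ : ℱ ∈ ℋ.powerset.filter (fun t => t.Nonempty ∧ ↑t ⊆ 𝒜) :=
      Finset.mem_filter.2 ⟨Finset.mem_powerset.2 hsub, hℱne, hℱ𝒜⟩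
    have hLne : (L (ℋ, Fs)).Nonempty := by
      obtain ⟨g, hg⟩ := hFsne
      exact ⟨(g, ℱ), Finset.mem_product.2 ⟨hg, hmemℱ⟩⟩
    have hLprop : ∀ p ∈ L (ℋ, Fs), p.2.Nonempty ∧ ↑p.2 ⊆ 𝒜 := by
      intro p hp
      have := (Finset.mem_product.1 hp).2
      exact (Finset.mem_filter.1 this).2
    have h : (⋂ p ∈ L (ℋ, Fs),
        {z : S | ∃ t ∈ G p.2, t * (p.1 * z) ∈ ⋂₀ (↑p.2 : Set (Set S))}).Nonempty :=
      hFIP _ hLne hLprop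
    have hxval : x (ℋ, Fs) = h.some := by
      rw [hxdef]; exact dif_pos h
    have hmem := h.some_mem
    simp only [Set.mem_iInter] at hmem
    have := hmem (f, ℱ) (Finset.mem_product.2 ⟨hf, hmemℱ⟩)
    rw [hxval]
    exact this
end

section
/- If a family 𝒜 of subsets of a semigroup S admits functions G : P_f(𝒜) → P_f(S) and x : P_f(𝒜) × P_f(S) → S such that for all F ∈ P_f(S) and ℱ ⊆ ℋ in P_f(𝒜), F·x(ℋ,F) ⊆ ⋃_{t∈G(ℱ)} t⁻¹(⋂ℱ), then the family {y⁻¹(G(ℱ))⁻¹(⋂ℱ) : y ∈ S, ℱ ∈ P_f(𝒜)} ∪ {⋃_{t∈G(ℱ)} t⁻¹(⋂ℱ) : ℱ ∈ P_f(𝒜)} has the finite intersection property. -/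
/-- in a semigroup `S`, if a family `𝒜` of subsets admits
functions `G : P_f(𝒜) → P_f(S)` and `x : P_f(𝒜) × P_f(S) → S` with
`F · x(ℋ, F) ⊆ ⋃_{t ∈ G ℱ} t⁻¹(⋂ℱ)` whenever `ℱ ⊆ ℋ` in `P_f(𝒜)` and
`F ∈ P_f(S)`, then the family
`{y⁻¹(G ℱ)⁻¹(⋂ℱ) : y ∈ S, ℱ ∈ P_f(𝒜)} ∪ {⋃_{t ∈ G ℱ} t⁻¹(⋂ℱ) : ℱ ∈ P_f(𝒜)}`
has the finite intersection property. -/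
theorem collectionwise_pw_syndetic_fip
    {S : Type*} [Semigroup S] (𝒜 : Set (Set S))
    (G : Finset (Set S) → Finset S) (x : Finset (Set S) × Finset S → S)
    (hG : ∀ ℱ : Finset (Set S), ℱ.Nonempty → ↑ℱ ⊆ 𝒜 → (G ℱ).Nonempty)
    (h : ∀ Fs : Finset S, Fs.Nonempty →
      ∀ ℱ ℋ : Finset (Set S), ℱ.Nonempty → ↑ℱ ⊆ 𝒜 →
        ℋ.Nonempty → ↑ℋ ⊆ 𝒜 → ℱ ⊆ ℋ →
        ∀ f ∈ Fs, ∃ t ∈ G ℱ, t * (f * x (ℋ, Fs)) ∈ ⋂₀ (↑ℱ : Set (Set S))) :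
    ∀ (L₁ : Finset (S × Finset (Set S))) (L₂ : Finset (Finset (Set S))),
      (∀ p ∈ L₁, p.2.Nonempty ∧ ↑p.2 ⊆ 𝒜) →
      (∀ ℱ ∈ L₂, ℱ.Nonempty ∧ ↑ℱ ⊆ 𝒜) →
      (L₁.Nonempty ∨ L₂.Nonempty) →
      ((⋂ p ∈ L₁,
          {z : S | ∃ t ∈ G p.2, t * (p.1 * z) ∈ ⋂₀ (↑p.2 : Set (Set S))}) ∩
        ⋂ ℱ ∈ L₂,
          {z : S | ∃ t ∈ G ℱ, t * z ∈ ⋂₀ (↑ℱ : Set (Set S))}).Nonempty := by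
  classical
  intro L₁ L₂ hL₁ hL₂ hne
  obtain ⟨f₀⟩ : Nonempty S := by
    rcases hne with ⟨p, hp⟩ | ⟨ℱ, hℱ⟩
    · exact ⟨p.1⟩
    · obtain ⟨t, _⟩ := hG ℱ (hL₂ ℱ hℱ).1 (hL₂ ℱ hℱ).2
      exact ⟨t⟩
  set ℋ : Finset (Set S) := L₁.biUnion Prod.snd ∪ L₂.biUnion id with hℋdef
  have hℋ𝒜 : ↑ℋ ⊆ 𝒜 := by
    intro A hA
    simp only [hℋdef, Finset.coe_union, Set.mem_union, Finset.coe_biUnion,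
      Set.mem_iUnion, Finset.mem_coe, id] at hA
    rcases hA with ⟨p, hp, hA⟩ | ⟨ℱ, hℱ, hA⟩
    · exact (hL₁ p hp).2 hA
    · exact (hL₂ ℱ hℱ).2 hA
  have hℋne : ℋ.Nonempty := by
    rcases hne with ⟨p, hp⟩ | ⟨ℱ, hℱ⟩
    · obtain ⟨A, hA⟩ := (hL₁ p hp).1
      exact ⟨A, by
        simp only [hℋdef, Finset.mem_union, Finset.mem_biUnion]
        exact Or.inl ⟨p, hp, hA⟩⟩
    · obtain ⟨A, hA⟩ := (hL₂ ℱ hℱ).1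
      exact ⟨A, by
        simp only [hℋdef, Finset.mem_union, Finset.mem_biUnion, id]
        exact Or.inr ⟨ℱ, hℱ, hA⟩⟩
  set Fs : Finset S := L₁.image (fun p => p.1 * f₀) ∪ {f₀} with hFsdef
  have hFsne : Fs.Nonempty := ⟨f₀, by simp [hFsdef]⟩
  refine ⟨f₀ * x (ℋ, Fs), ?_, ?_⟩
  · simp only [Set.mem_iInter]
    intro p hp
    have hsub : p.2 ⊆ ℋ := by
      intro A hA
      simp only [hℋdef, Finset.mem_union, Finset.mem_biUnion]
      exact Or.inl ⟨p, hp, hA⟩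
    obtain ⟨t, ht, hmem⟩ := h Fs hFsne p.2 ℋ (hL₁ p hp).1 (hL₁ p hp).2 hℋne hℋ𝒜 hsub
      (p.1 * f₀) (by
        simp only [hFsdef, Finset.mem_union, Finset.mem_image]
        exact Or.inl ⟨p, hp, rfl⟩)
    rw [mul_assoc] at hmem
    exact ⟨t, ht, hmem⟩
  · simp only [Set.mem_iInter]
    intro ℱ hℱ
    have hsub : ℱ ⊆ ℋ := by
      intro A hA
      simp only [hℋdef, Finset.mem_union, Finset.mem_biUnion, id]
      exact Or.inr ⟨ℱ, hℱ, hA⟩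
    obtain ⟨t, ht, hmem⟩ := h Fs hFsne ℱ ℋ (hL₂ ℱ hℱ).1 (hL₂ ℱ hℱ).2 hℋne hℋ𝒜 hsub
      f₀ (by simp [hFsdef])
    exact ⟨t, ht, hmem⟩
end

section
/- For any finite coloring of ℕ there exist x, y and a color class containing x, y, and x + y (Schur's theorem). -/
/-- Schur's theorem: for every finite coloring `c : ℕ → Fin r`
there exist positive `x, y ∈ ℕ` such that `x`, `y` and `x + y` all receive
the same color. -/
theorem schur (r : ℕ) (c : ℕ → Fin r) :
    ∃ x y : ℕ, 0 < x ∧ 0 < y ∧ c x = c y ∧ c y = c (x + y) := by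
  obtain ⟨s, hs, b, hb⟩ := Hindman.exists_FS_of_finite_cover
    (M := ℕ+) (Set.range fun i : Fin r => {n : ℕ+ | c (n : ℕ) = i})
    (Set.finite_range _)
    (fun n _ => Set.mem_sUnion.2 ⟨_, Set.mem_range_self (c (n : ℕ)), rfl⟩)
  obtain ⟨i, rfl⟩ := hs
  have h1 : c ((b.head : ℕ+) : ℕ) = i := hb (Hindman.FS.head b)
  have h2 : c ((b.tail.head : ℕ+) : ℕ) = i :=
    hb (Hindman.FS.tail b _ (Hindman.FS.head b.tail))
  have h3 : c (((b.head + b.tail.head : ℕ+) : ℕ)) = i :=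
    hb (Hindman.FS.cons b _ (Hindman.FS.head b.tail))
  refine ⟨b.head, b.tail.head, b.head.pos, b.tail.head.pos, ?_, ?_⟩
  · rw [h1, h2]
  · rw [h2, ← PNat.add_coe, h3]
end

section
/- If A is a piecewise syndetic subset of a semigroup S and B is a piecewise syndetic subset of a semigroup T, then A × B is a piecewise syndetic subset of S × T. -/
/-- `A` is piecewise syndetic in the semigroup `S`: there is a finite `G ⊆ S`
such that every finite `F ⊆ S` has a right translate inside
`⋃_{t ∈ G} t⁻¹A`. -/
def SgPiecewiseSyndetic {S : Type*} [Semigroup S] (A : Set S) : Prop :=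
  ∃ G : Finset S, ∀ F : Finset S, ∃ x : S, ∀ f ∈ F, ∃ t ∈ G, t * (f * x) ∈ A

/-- the product of two piecewise syndetic sets is piecewise
syndetic in the product semigroup. -/
theorem product_of_piecewise_syndetic {S T : Type*} [Semigroup S] [Semigroup T]
    (A : Set S) (B : Set T) (hA : SgPiecewiseSyndetic A) (hB : SgPiecewiseSyndetic B) :
    SgPiecewiseSyndetic (A ×ˢ B) := by
  obtain ⟨G₁, hG₁⟩ := hA
  obtain ⟨G₂, hG₂⟩ := hB
  classical
  refine ⟨G₁ ×ˢ G₂, fun F => ?_⟩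
  obtain ⟨x₁, hx₁⟩ := hG₁ (F.image Prod.fst)
  obtain ⟨x₂, hx₂⟩ := hG₂ (F.image Prod.snd)
  refine ⟨(x₁, x₂), fun f hf => ?_⟩
  obtain ⟨t₁, ht₁, h₁⟩ := hx₁ f.1 (Finset.mem_image_of_mem _ hf)
  obtain ⟨t₂, ht₂, h₂⟩ := hx₂ f.2 (Finset.mem_image_of_mem _ hf)
  exact ⟨(t₁, t₂), Finset.mem_product.2 ⟨ht₁, ht₂⟩, h₁, h₂⟩
end
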